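/- Let β > 0, L > 0, and ℓ = ⌊β⌋. Let x₀ ∈ ℝ, h > 0, C ≥ 1, let f : ℝ → ℝ be ℓ-times differentiable with the ℓ-th derivative satisfying |f^{(ℓ)}(x) − f^{(ℓ)}(x′)| ≤ L·|x − x′|^{β−ℓ} for all x, x′, and let X₁, …, X_n ∈ ℝ and W₁, …, W_n ∈ ℝ satisfy: (i) ∑_{k=1}^n W_k (X_k − x₀)^j equals 1 if j = 0 and equals 0 for each j ∈ {1,…,ℓ}; (ii) ∑_{k=1}^n |W_k| ≤ C; (iii) W_k = 0 whenever |X_k − x₀| > h. Then |∑_{k=1}^n W_k f(X_k) − f(x₀)| ≤ C·L·h^β / ℓ!. -/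

import Mathlib

/-! Let `P` be the Taylor polynomial of degree `ℓ` of `f` at `x₀`. The weights reproduce `P`
exactly, so the bias is `∑ W_k (f(X_k) - P(X_k))`. Lagrange's remainder of order `ℓ - 1` gives
`f(x) - P(x) = (f^{(ℓ)}(ξ) - f^{(ℓ)}(x₀)) (x - x₀)^ℓ / ℓ!`, which the Hölder condition bounds by
`L |x - x₀|^β / ℓ!`; this is at most `L h^β / ℓ!` wherever `W_k ≠ 0`, and `∑ |W_k| ≤ C`. -/

open Finset Set Nat

section IteratedDeriv

variable {𝕜 F : Type*} [NontriviallyNormedField 𝕜] [NormedAddCommGroup F] [NormedSpace 𝕜 F]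

theorem iteratedDerivWithin_eq_iteratedDeriv_of_differentiable {f : 𝕜 → F} {s : Set 𝕜} {x : 𝕜}
    {n : ℕ} (hf : ∀ i < n, Differentiable 𝕜 (iteratedDeriv i f)) (hs : UniqueDiffOn 𝕜 s)
    (hx : x ∈ s) : iteratedDerivWithin n f s x = iteratedDeriv n f x := by
  induction n generalizing x with
  | zero => simp
  | succ n ih =>
    have ih' : ∀ y ∈ s, iteratedDerivWithin n f s y = iteratedDeriv n f y :=
      fun y hy => ih (fun i hi => hf i (by omega)) hy
    rw [iteratedDerivWithin_succ, iteratedDeriv_succ, derivWithin_congr ih' (ih' x hx)]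
    exact ((hf n n.lt_succ_self) x).derivWithin (hs x hx)

end IteratedDeriv

section Taylor

variable {f : ℝ → ℝ} {x₀ x : ℝ}

theorem taylor_mean_remainder_lagrange_of_differentiable {n : ℕ}
    (hf : ∀ i ≤ n, Differentiable ℝ (iteratedDeriv i f)) (hx : x₀ ≠ x) :
    ∃ ξ ∈ uIoo x₀ x, f x - ∑ j ∈ range (n + 1), iteratedDeriv j f x₀ / j ! * (x - x₀) ^ j =
      iteratedDeriv (n + 1) f ξ * (x - x₀) ^ (n + 1) / (n + 1)! := by
  have hs : UniqueDiffOn ℝ (uIcc x₀ x) := uniqueDiffOn_uIcc hx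
  have hwithin : ∀ i ≤ n + 1, ∀ y ∈ uIcc x₀ x,
      iteratedDerivWithin i f (uIcc x₀ x) y = iteratedDeriv i f y := fun i hi y hy =>
    iteratedDerivWithin_eq_iteratedDeriv_of_differentiable (fun j hj => hf j (by omega)) hs hy
  have hcont : ContDiffOn ℝ n f (uIcc x₀ x) :=
    (contDiff_of_differentiable_iteratedDeriv fun m hm => hf m (by exact_mod_cast hm)).contDiffOn
  have hdiff : DifferentiableOn ℝ (iteratedDerivWithin n f (uIcc x₀ x)) (uIoo x₀ x) :=
    (hf n le_rfl).differentiableOn.congr fun y hy =>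
      hwithin n (by omega) y (uIoo_subset_uIcc_self hy)
  obtain ⟨ξ, hξ, hrem⟩ := taylor_mean_remainder_lagrange hx hcont hdiff
  refine ⟨ξ, hξ, ?_⟩
  rw [taylor_within_apply, hwithin (n + 1) le_rfl ξ (uIoo_subset_uIcc_self hξ)] at hrem
  rw [← hrem]
  congr 1
  refine sum_congr rfl fun j hj => ?_
  rw [hwithin j (mem_range.1 hj).le x₀ left_mem_uIcc, smul_eq_mul]
  ring

/-- Unlike the Lagrange form of order `ℓ`, this needs no derivative of order `ℓ + 1`. -/
theorem exists_taylor_remainder_eq_iteratedDeriv_sub {ℓ : ℕ}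
    (hf : ∀ i < ℓ, Differentiable ℝ (iteratedDeriv i f)) :
    ∃ ξ ∈ uIcc x₀ x, f x - ∑ j ∈ range (ℓ + 1), iteratedDeriv j f x₀ / j ! * (x - x₀) ^ j =
      (iteratedDeriv ℓ f ξ - iteratedDeriv ℓ f x₀) * (x - x₀) ^ ℓ / ℓ ! := by
  rcases eq_or_ne x₀ x with rfl | hx
  · refine ⟨x₀, left_mem_uIcc, ?_⟩
    rw [sum_range_succ']
    simp
  cases ℓ with
  | zero => exact ⟨x, right_mem_uIcc, by simp⟩
  | succ m =>
    obtain ⟨ξ, hξ, hrem⟩ :=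
      taylor_mean_remainder_lagrange_of_differentiable (n := m) (fun i hi => hf i (by omega)) hx
    refine ⟨ξ, uIoo_subset_uIcc_self hξ, ?_⟩
    rw [sum_range_succ, ← sub_sub, hrem]
    ring

theorem abs_taylor_remainder_le_of_holder {ℓ : ℕ} {β L : ℝ} (hℓβ : (ℓ : ℝ) ≤ β) (hL : 0 ≤ L)
    (hf : ∀ i < ℓ, Differentiable ℝ (iteratedDeriv i f))
    (hHolder : ∀ y, |iteratedDeriv ℓ f y - iteratedDeriv ℓ f x₀| ≤ L * |y - x₀| ^ (β - ℓ)) :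
    |f x - ∑ j ∈ range (ℓ + 1), iteratedDeriv j f x₀ / j ! * (x - x₀) ^ j|
      ≤ L * |x - x₀| ^ β / ℓ ! := by
  obtain ⟨ξ, hξ, hrem⟩ := exists_taylor_remainder_eq_iteratedDeriv_sub (x := x) hf
  have hξx : |ξ - x₀| ≤ |x - x₀| := by
    rw [← Real.dist_eq, ← Real.dist_eq, dist_comm ξ, dist_comm x]
    exact Real.dist_left_le_of_mem_uIcc hξ
  have hpow : |x - x₀| ^ ℓ * |x - x₀| ^ (β - ℓ) = |x - x₀| ^ β := by
    rw [← Real.rpow_natCast, ← Real.rpow_add_of_nonneg (abs_nonneg _) ℓ.cast_nonneg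
      (sub_nonneg.2 hℓβ), add_sub_cancel]
  rw [hrem, abs_div, abs_mul, abs_pow, Nat.abs_cast]
  calc |iteratedDeriv ℓ f ξ - iteratedDeriv ℓ f x₀| * |x - x₀| ^ ℓ / ℓ !
      ≤ L * |x - x₀| ^ (β - ℓ) * |x - x₀| ^ ℓ / ℓ ! := by
        gcongr
        exact (hHolder ξ).trans (by gcongr)
    _ = L * |x - x₀| ^ β / ℓ ! := by rw [← hpow]; ring

end Taylor

section Weights

variable {ι R : Type*} [Fintype ι]

theorem sum_mul_polynomial_eq_coeff_zero [CommRing R] {W d : ι → R} {n : ℕ}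
    (h0 : ∑ k, W k = 1) (hj : ∀ j, 1 ≤ j → j ≤ n → ∑ k, W k * d k ^ j = 0) (c : ℕ → R) :
    ∑ k, W k * ∑ j ∈ range (n + 1), c j * d k ^ j = c 0 := by
  simp_rw [mul_sum]
  rw [sum_comm, sum_eq_single 0 (fun j hjn hj0 => ?_) (by simp)]
  · simp [← sum_mul, h0]
  · simp_rw [mul_left_comm _ (c j), ← mul_sum, hj j (Nat.one_le_iff_ne_zero.2 hj0)
      (Nat.lt_succ_iff.1 (mem_range.1 hjn)), mul_zero]

theorem abs_sum_mul_le_of_abs_le {W g : ι → ℝ} {B C : ℝ} (hB : 0 ≤ B)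
    (habs : ∑ k, |W k| ≤ C) (hg : ∀ k, W k ≠ 0 → |g k| ≤ B) :
    |∑ k, W k * g k| ≤ C * B := by
  calc |∑ k, W k * g k| ≤ ∑ k, |W k| * |g k| := by
        simpa only [abs_mul] using abs_sum_le_sum_abs (fun k => W k * g k) univ
    _ ≤ ∑ k, |W k| * B := sum_le_sum fun k _ => by
        rcases eq_or_ne (W k) 0 with hk | hk
        · simp [hk]
        · exact mul_le_mul_of_nonneg_left (hg k hk) (abs_nonneg _)
    _ = (∑ k, |W k|) * B := (sum_mul ..).symm
    _ ≤ C * B := mul_le_mul_of_nonneg_right habs hB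

end Weights

theorem lp_bias_bound_general
    (β L : ℝ) (hβ : 0 < β) (hL : 0 < L)
    (ℓ : ℕ) (hℓ : ℓ = ⌊β⌋₊)
    (x₀ h C : ℝ) (hh : 0 < h)
    (f : ℝ → ℝ)
    (hdiff : ∀ i < ℓ, Differentiable ℝ (iteratedDeriv i f))
    (hHolder : ∀ x x' : ℝ,
      |iteratedDeriv ℓ f x - iteratedDeriv ℓ f x'| ≤ L * |x - x'| ^ (β - ℓ))
    (n : ℕ) (X W : Fin n → ℝ)
    (hrepr0 : ∑ k, W k = 1)
    (hrepr : ∀ j : ℕ, 1 ≤ j → j ≤ ℓ → ∑ k, W k * (X k - x₀) ^ j = 0)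
    (habs : ∑ k, |W k| ≤ C)
    (hsupp : ∀ k, h < |X k - x₀| → W k = 0) :
    |∑ k, W k * f (X k) - f x₀| ≤ C * L * h ^ β / (Nat.factorial ℓ) := by
  have hℓβ : (ℓ : ℝ) ≤ β := hℓ ▸ Nat.floor_le hβ.le
  set P : ℝ → ℝ := fun y => ∑ j ∈ range (ℓ + 1), iteratedDeriv j f x₀ / j ! * (y - x₀) ^ j
  have hP : ∑ k, W k * P (X k) = f x₀ := by
    simpa [P] using sum_mul_polynomial_eq_coeff_zero (d := fun k => X k - x₀) hrepr0 hrepr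
      (fun j => iteratedDeriv j f x₀ / j !)
  have hbias : ∑ k, W k * f (X k) - f x₀ = ∑ k, W k * (f (X k) - P (X k)) := by
    simp only [mul_sub, sum_sub_distrib, hP]
  rw [hbias, show C * L * h ^ β / ℓ ! = C * (L * h ^ β / ℓ !) by ring]
  refine abs_sum_mul_le_of_abs_le (by positivity) habs fun k hk => ?_
  have hXk : |X k - x₀| ≤ h := not_lt.1 (mt (hsupp k) hk)
  calc |f (X k) - P (X k)| ≤ L * |X k - x₀| ^ β / ℓ ! :=
        abs_taylor_remainder_le_of_holder hℓβ hL.le hdiff fun y => hHolder y x₀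
    _ ≤ L * h ^ β / ℓ ! := by gcongr

/-- **Bias bound for local polynomial weights on a Hölder class.** Let `β > 0`, `ℓ = ⌊β⌋`, and
let `f` be `ℓ`-times differentiable with `|f^{(ℓ)}(x) − f^{(ℓ)}(x')| ≤ L |x − x'|^{β−ℓ}`.
If the weights `W_k` reproduce polynomials of degree ≤ ℓ at `x₀`, satisfy `∑ |W_k| ≤ C`, and
vanish when `|X_k − x₀| > h`, then `|∑ W_k f(X_k) − f(x₀)| ≤ C L h^β / ℓ!`. -/
theorem lp_bias_bound
    (β L : ℝ) (hβ : 0 < β) (hL : 0 < L)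
    (ℓ : ℕ) (hℓ : ℓ = ⌊β⌋₊)
    (x₀ h C : ℝ) (hh : 0 < h) (hC : 1 ≤ C)
    (f : ℝ → ℝ)
    (hdiff : ∀ i < ℓ, Differentiable ℝ (iteratedDeriv i f))
    (hHolder : ∀ x x' : ℝ,
      |iteratedDeriv ℓ f x - iteratedDeriv ℓ f x'| ≤ L * |x - x'| ^ (β - ℓ))
    (n : ℕ) (X W : Fin n → ℝ)
    (hrepr0 : ∑ k, W k = 1)
    (hrepr : ∀ j : ℕ, 1 ≤ j → j ≤ ℓ → ∑ k, W k * (X k - x₀) ^ j = 0)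
    (habs : ∑ k, |W k| ≤ C)
    (hsupp : ∀ k, h < |X k - x₀| → W k = 0) :
    |∑ k, W k * f (X k) - f x₀| ≤ C * L * h ^ β / (Nat.factorial ℓ) :=
  lp_bias_bound_general β L hβ hL ℓ hℓ x₀ h C hh f hdiff hHolder n X W hrepr0 hrepr habs hsupp
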